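/- arXiv:1307.5876 — 3 statements merged into one kernel-verified Lean document; each statement's English description precedes it below -/
import Mathlib

section
/- The characteristic function of a selfdecomposable probability measure μ on ℝ never vanishes: for all u ∈ ℝ, φ_μ(u) ≠ 0, where for each 0 < c < 1 there is a measure μ_c with μ = μ_c * T_c μ. -/
open MeasureTheory ProbabilityTheory

def SelfDecomposable (μ : Measure ℝ) : Prop :=
  ∀ c : ℝ, 0 < c → c < 1 → ∃ μc : Measure ℝ, IsProbabilityMeasure μc ∧
    μ = μc.conv (μ.map (fun x => c * x))

/-- The characteristic function (Fourier transform) of a measure on `ℝ`. -/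
noncomputable def charFun (μ : Measure ℝ) (u : ℝ) : ℂ :=
  ∫ x, Complex.exp (u * x * Complex.I) ∂μ

/-! If `φ` had a zero, let `t₀ > 0` be the smallest one. For every `c < 1` the factor `μ_c`
satisfies `φ(t₀) = φ_c(t₀) φ(c t₀)` with `φ(c t₀) ≠ 0`, so `φ_c(t₀) = 0`. The doubling
inequality `1 - Re ψ(2s) ≤ 4 (1 - Re ψ(s))`, valid for every characteristic function `ψ`,
then gives `Re φ_c(t₀/2) ≤ 3/4`. But `φ_c(t₀/2) = φ(t₀/2) / φ(c t₀/2) → 1` as `c → 1`. -/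

open Filter Topology
open scoped RealInnerProductSpace

lemma exists_pos_zero_forall_lt_ne_zero {E : Type*} [TopologicalSpace E] [Zero E] [T1Space E]
    {f : ℝ → E} (hf : Continuous f) (h0 : f 0 ≠ 0) {u : ℝ} (hu : 0 ≤ u) (hfu : f u = 0) :
    ∃ t₀, 0 < t₀ ∧ f t₀ = 0 ∧ ∀ t, 0 ≤ t → t < t₀ → f t ≠ 0 := by
  set S := {t | 0 ≤ t ∧ f t = 0}
  have hS : IsClosed S := (isClosed_le continuous_const continuous_id).inter
    (isClosed_singleton.preimage hf)
  have hbdd : BddBelow S := ⟨0, fun _ ht => ht.1⟩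
  obtain ⟨hnonneg, hzero⟩ : sInf S ∈ S := hS.csInf_mem ⟨u, hu, hfu⟩ hbdd
  refine ⟨sInf S, hnonneg.lt_of_ne fun h => h0 (h ▸ hzero), hzero, fun t ht hlt hft => ?_⟩
  exact hlt.not_ge (csInf_le hbdd ⟨ht, hft⟩)

namespace MeasureTheory

section Doubling

variable {E : Type*} [NormedAddCommGroup E] [InnerProductSpace ℝ E] {mE : MeasurableSpace E}
  [OpensMeasurableSpace E] (μ : Measure E) [IsProbabilityMeasure μ]

lemma one_sub_re_charFun (t : E) :
    1 - (charFun μ t).re = ∫ x, (1 - Real.cos ⟪x, t⟫) ∂μ := by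
  have hexp : Integrable (fun x => Complex.exp (⟪x, t⟫ * Complex.I)) μ :=
    (integrable_const (1 : ℝ)).mono (by fun_prop) (by simp)
  rw [integral_sub (integrable_const 1) (hexp.re.congr (by simp [Complex.exp_ofReal_mul_I_re])),
    charFun_apply, ← RCLike.re_to_complex, ← integral_re hexp]
  simp [Complex.exp_ofReal_mul_I_re]

lemma one_sub_re_charFun_two_smul_le (t : E) :
    1 - (charFun μ ((2 : ℝ) • t)).re ≤ 4 * (1 - (charFun μ t).re) := by
  have hint (s : E) : Integrable (fun x => 1 - Real.cos ⟪x, s⟫) μ :=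
    (integrable_const 1).sub <| (integrable_const (1 : ℝ)).mono (by fun_prop)
      (ae_of_all _ fun x => by simpa using Real.abs_cos_le_one ⟪x, s⟫)
  rw [one_sub_re_charFun, one_sub_re_charFun, ← integral_const_mul]
  refine integral_mono (hint _) ((hint t).const_mul 4) fun x => ?_
  have hcos : Real.cos ⟪x, (2 : ℝ) • t⟫ = 2 * Real.cos ⟪x, t⟫ ^ 2 - 1 := by
    rw [inner_smul_right, Real.cos_two_mul]
  nlinarith [Real.cos_le_one ⟪x, t⟫, Real.neg_one_le_cos ⟪x, t⟫]

end Doubling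

variable {μ : Measure ℝ}

lemma exists_pos_charFun_eq_zero_forall_lt_ne_zero [IsProbabilityMeasure μ] {u : ℝ}
    (hu : charFun μ u = 0) :
    ∃ t₀, 0 < t₀ ∧ charFun μ t₀ = 0 ∧ ∀ t, 0 ≤ t → t < t₀ → charFun μ t ≠ 0 := by
  have habs : charFun μ |u| = 0 := by
    rcases abs_choice u with h | h <;> simp [h, hu]
  exact exists_pos_zero_forall_lt_ne_zero continuous_charFun (by simp) (abs_nonneg u) habs

lemma tendsto_re_charFun_div_charFun_mul [IsFiniteMeasure μ] {s : ℝ} (hs : charFun μ s ≠ 0) :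
    Tendsto (fun c : ℝ => (charFun μ s / charFun μ (c * s)).re) (𝓝 1) (𝓝 1) := by
  have hcont : ContinuousAt (fun c : ℝ => (charFun μ s / charFun μ (c * s)).re) 1 := by
    fun_prop (disch := simpa using hs)
  simpa [div_self hs] using hcont.tendsto

lemma _root_.SelfDecomposable.exists_charFun_eq_mul [IsFiniteMeasure μ]
    (hμ : SelfDecomposable μ) {c : ℝ} (hc₀ : 0 < c) (hc₁ : c < 1) :
    ∃ μc : Measure ℝ, IsProbabilityMeasure μc ∧
      ∀ u, charFun μ u = charFun μc u * charFun μ (c * u) := by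
  obtain ⟨μc, hμc, hdecomp⟩ := hμ c hc₀ hc₁
  refine ⟨μc, hμc, fun u => ?_⟩
  conv_lhs => rw [hdecomp]
  rw [charFun_conv, charFun_map_mul]

lemma _root_.SelfDecomposable.re_charFun_div_le [IsFiniteMeasure μ]
    (hμ : SelfDecomposable μ) {c t : ℝ} (hc₀ : 0 < c) (hc₁ : c < 1) (ht : charFun μ t = 0)
    (hct : charFun μ (c * t) ≠ 0) (hct' : charFun μ (c * (t / 2)) ≠ 0) :
    (charFun μ (t / 2) / charFun μ (c * (t / 2))).re ≤ 3 / 4 := by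
  obtain ⟨μc, hμc, hmul⟩ := hμ.exists_charFun_eq_mul hc₀ hc₁
  have hzero : charFun μc t = 0 := by
    simpa [hct] using (hmul t).symm.trans ht
  have hquot : charFun μc (t / 2) = charFun μ (t / 2) / charFun μ (c * (t / 2)) := by
    rw [hmul, mul_div_cancel_right₀ _ hct']
  have hdouble := one_sub_re_charFun_two_smul_le μc (t / 2)
  rw [smul_eq_mul, mul_div_cancel₀ t two_ne_zero, hzero, hquot] at hdouble
  norm_num at hdouble
  linarith

end MeasureTheory

theorem charFun_ne_zero_of_selfDecomposable (μ : Measure ℝ) [IsProbabilityMeasure μ]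
    (hμ : SelfDecomposable μ) : ∀ u : ℝ, _root_.charFun μ u ≠ 0 := by
  intro u hu
  rw [_root_.charFun, ← charFun_apply_real] at hu
  obtain ⟨t₀, ht₀, hzero, hne⟩ := exists_pos_charFun_eq_zero_forall_lt_ne_zero hu
  have hlim := (tendsto_re_charFun_div_charFun_mul (hne (t₀ / 2) (by positivity) (by linarith)))
    |>.mono_left (nhdsWithin_le_nhds (s := Set.Iio 1))
  have hbound := le_of_tendsto hlim <| by
    filter_upwards [Ioo_mem_nhdsLT one_pos] with c ⟨hc₀, hc₁⟩
    exact hμ.re_charFun_div_le hc₀ hc₁ hzero (hne _ (by positivity) (by nlinarith))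
      (hne _ (by positivity) (by nlinarith))
  norm_num at hbound
end

section
/- Every selfdecomposable real random variable is a perpetuity: if X is selfdecomposable, then there exists a random vector (A, B) with 0 ≤ A ≤ 1 almost surely, A nondegenerate (not a.s. constant equal to 0 or 1), and an independent copy X' of X independent of (A, B), such that X =_d A X' + B. -/
open MeasureTheory ProbabilityTheory

def SelfDecRV {Ω : Type*} [MeasurableSpace Ω] (P : Measure Ω) (X : Ω → ℝ) : Prop :=
  ∀ t : ℝ, 0 < t → ∃ Xt : Ω → ℝ, IndepFun Xt X P ∧
    P.map X = P.map (fun ω => Xt ω + Real.exp (-t) * X ω)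

/-!
Selfdecomposability at `t = 1` already gives `X =_d X₁ + e⁻¹ X` with `X₁` independent of
`X`, so `X` is a perpetuity with the deterministic coefficient `A = e⁻¹ ∈ (0, 1)` and `B = X₁`.
To make `(A, B)` and the copy `X'` independent on a common space, realise them as the
coordinates of `law(X₁) ⊗ law(X)` on `ℝ × ℝ`; independence turns the law of `X₁ + e⁻¹ X`
into the image of that product measure.
-/

section

variable {Ω : Type*} [MeasurableSpace Ω] {P : Measure Ω}

lemma ProbabilityTheory.IndepFun.map_add_const_mul_eq_map_prod [IsFiniteMeasure P]
    {Y X : Ω → ℝ} (hY : AEMeasurable Y P) (hX : AEMeasurable X P) (hindep : IndepFun Y X P)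
    (a : ℝ) :
    P.map (fun ω => Y ω + a * X ω) =
      ((P.map Y).prod (P.map X)).map (fun p => a * p.2 + p.1) := by
  rw [← (indepFun_iff_map_prod_eq_prod_map_map hY hX).mp hindep,
    AEMeasurable.map_map_of_aemeasurable (by fun_prop) (hY.prodMk hX)]
  congr 1
  funext ω
  simp only [Function.comp_apply]
  ring

lemma SelfDecRV.exists_aemeasurable_indepFun [IsProbabilityMeasure P] {X : Ω → ℝ}
    (hX : AEMeasurable X P) (hsd : SelfDecRV P X) {t : ℝ} (ht : 0 < t) :
    ∃ Xt : Ω → ℝ, AEMeasurable Xt P ∧ IndepFun Xt X P ∧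
      P.map X = P.map (fun ω => Xt ω + Real.exp (-t) * X ω) := by
  obtain ⟨Xt, hindep, hmap⟩ := hsd t ht
  have : IsProbabilityMeasure (P.map X) := Measure.isProbabilityMeasure_map hX
  -- `Xt + e^{-t} X` has a nonzero law, hence is a.e. measurable, and so is `Xt`.
  have hsum : AEMeasurable (fun ω => Xt ω + Real.exp (-t) * X ω) P :=
    aemeasurable_of_map_neZero (hmap ▸ inferInstance)
  refine ⟨Xt, ?_, hindep, hmap⟩
  convert hsum.sub (hX.const_mul (Real.exp (-t))) using 1
  funext ω
  simp

end

/-- Every selfdecomposable law is a perpetuity: `X =_d A X' + B` with `0 ≤ A ≤ 1`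
a.s., `A` nondegenerate, and `X'` an independent copy of `X` independent of `(A,B)`. -/
theorem selfDec_is_perpetuity {Ω : Type*} [MeasurableSpace Ω] (P : Measure Ω)
    [IsProbabilityMeasure P] (X : Ω → ℝ) (hX : Measurable X) (hsd : SelfDecRV P X) :
    ∃ (Ω' : Type) (_ : MeasurableSpace Ω') (Q : Measure Ω') (_ : IsProbabilityMeasure Q)
      (A B X' : Ω' → ℝ),
      Measurable A ∧ Measurable B ∧ Measurable X' ∧
      (∀ᵐ ω ∂Q, 0 ≤ A ω ∧ A ω ≤ 1) ∧
      ¬ (∀ᵐ ω ∂Q, A ω = 0) ∧ ¬ (∀ᵐ ω ∂Q, A ω = 1) ∧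
      Q.map X' = P.map X ∧
      IndepFun (fun ω => (A ω, B ω)) X' Q ∧
      P.map X = Q.map (fun ω => A ω * X' ω + B ω) := by
  obtain ⟨Y, hY, hindep, hmap⟩ := hsd.exists_aemeasurable_indepFun hX.aemeasurable one_pos
  have : IsProbabilityMeasure (P.map Y) := Measure.isProbabilityMeasure_map hY
  have : IsProbabilityMeasure (P.map X) := Measure.isProbabilityMeasure_map hX.aemeasurable
  have hexp_lt_one : Real.exp (-1) < 1 := Real.exp_lt_one_iff.mpr (by norm_num)
  refine ⟨ℝ × ℝ, inferInstance, (P.map Y).prod (P.map X), inferInstance,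
    fun _ => Real.exp (-1), Prod.fst, Prod.snd, measurable_const, measurable_fst, measurable_snd,
    ae_of_all _ fun _ => ⟨(Real.exp_pos _).le, hexp_lt_one.le⟩, ?_, ?_, ?_, ?_, ?_⟩
  · simp [Real.exp_ne_zero, IsProbabilityMeasure.ne_zero]
  · simp [hexp_lt_one.ne, IsProbabilityMeasure.ne_zero]
  · simp [Measure.map_snd_prod]
  · exact (indepFun_prod measurable_id measurable_id).comp
      (measurable_const.prodMk measurable_id) measurable_id
  · exact hmap.trans (hindep.map_add_const_mul_eq_map_prod hY hX.aemeasurable _)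
end

section
/- Let U be uniform on [0,1] and γ_{α+1,λ} a gamma random variable with shape α+1 and rate λ, independent of U. Then U^{1/α} · γ_{α+1,λ} has the gamma distribution with shape α and rate λ. -/
/-!
Given `G = g > 0`, the variable `g U^{1/α}` has density `α x^{α-1} / g^α` on `(0, g]`: it is the
image of the uniform law under the inverse of `x ↦ (x / g)^α`. Mixing over the law of `G` and
using `Γ(α+1) = α Γ(α)`, the pair `(g U^{1/α}, G)` has joint density
`λ^{α+1} x^{α-1} e^{-λ g} / Γ(α)` on `0 < x ≤ g`; integrating `g` over `(x, ∞)` leaves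
`λ^α x^{α-1} e^{-λ x} / Γ(α)`.
-/

open MeasureTheory ProbabilityTheory Real Set
open scoped ENNReal

theorem lintegral_withDensity_apply_eq_withDensity_lintegral {β γ : Type*} [MeasurableSpace β] [MeasurableSpace γ]
    (ν : Measure β) [SFinite ν] (μ : Measure γ) [SFinite μ] {k : β → γ → ℝ≥0∞}
    (hk : Measurable (Function.uncurry k)) {s : Set γ} (hs : MeasurableSet s) :
    ∫⁻ b, μ.withDensity (k b) s ∂ν = μ.withDensity (fun x => ∫⁻ b, k b x ∂ν) s := by
  simp_rw [withDensity_apply _ hs]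
  exact lintegral_lintegral_swap hk.aemeasurable

theorem lintegral_Ioi_exp_neg_mul {lam : ℝ} (hlam : 0 < lam) (c : ℝ) :
    ∫⁻ x in Ioi c, ENNReal.ofReal (exp (-(lam * x))) =
      ENNReal.ofReal (exp (-(lam * c)) / lam) := by
  simp_rw [← neg_mul]
  rw [← ofReal_integral_eq_lintegral_ofReal (integrableOn_exp_mul_Ioi (by linarith) c)
    (ae_of_all _ fun _ => (exp_pos _).le), integral_exp_mul_Ioi (by linarith), neg_div_neg_eq]

theorem ae_pos_gammaMeasure (a r : ℝ) : ∀ᵐ x ∂gammaMeasure a r, 0 < x := by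
  have hpdf : Measurable (gammaPDF a r) := (measurable_gammaPDFReal a r).ennreal_ofReal
  rw [gammaMeasure, ae_withDensity_iff hpdf]
  filter_upwards [Measure.ae_ne volume 0] with x hx hpdf
  exact hx.lt_or_gt.resolve_left fun hneg => hpdf (gammaPDF_of_neg hneg)

section PowerScaling

variable {α g : ℝ}

theorem invOn_rpow_inv_mul_div_rpow (hα : 0 < α) (hg : 0 < g) :
    InvOn (fun u : ℝ => u ^ α⁻¹ * g) (fun x => (x / g) ^ α) (Ioc 0 g) (Ioc 0 1) := by
  constructor
  · intro x hx
    simp only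
    rw [← rpow_mul (div_pos hx.1 hg).le, mul_inv_cancel₀ hα.ne', rpow_one,
      div_mul_cancel₀ _ hg.ne']
  · intro u hu
    simp only
    rw [mul_div_cancel_right₀ _ hg.ne', ← rpow_mul hu.1.le, inv_mul_cancel₀ hα.ne', rpow_one]

theorem bijOn_div_rpow (hα : 0 < α) (hg : 0 < g) :
    BijOn (fun x : ℝ => (x / g) ^ α) (Ioc 0 g) (Ioc 0 1) := by
  refine (invOn_rpow_inv_mul_div_rpow hα hg).bijOn (fun x hx => ?_) (fun u hu => ?_)
  · have hxg : 0 < x / g := div_pos hx.1 hg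
    exact ⟨rpow_pos_of_pos hxg α, rpow_le_one hxg.le ((div_le_one hg).2 hx.2) hα.le⟩
  · exact ⟨by have := hu.1; positivity,
      mul_le_of_le_one_left hg.le (rpow_le_one hu.1.le hu.2 (inv_pos.2 hα).le)⟩

theorem hasDerivAt_div_rpow {x : ℝ} (hg : 0 < g) (hx : 0 < x) :
    HasDerivAt (fun x : ℝ => (x / g) ^ α) (α * x ^ (α - 1) / g ^ α) x := by
  have h := ((hasDerivAt_id' x).div_const g).rpow_const (p := α) (Or.inl (div_pos hx hg).ne')
  convert h using 1
  rw [div_rpow hx.le hg.le, rpow_sub hg, rpow_one]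
  field_simp

theorem map_rpow_inv_mul_uniform (hα : 0 < α) (hg : 0 < g) :
    (volume.restrict (Icc (0:ℝ) 1)).map (fun u => u ^ α⁻¹ * g) =
      (volume.restrict (Ioc 0 g)).withDensity
        fun x => ENNReal.ofReal (α * x ^ (α - 1) / g ^ α) := by
  have hbij := bijOn_div_rpow hα hg
  have hcov := map_withDensity_abs_det_fderiv_eq_addHaar volume
    measurableSet_Ioc.nullMeasurableSet
    (fun x hx => (hasDerivAt_div_rpow (α := α) hg hx.1).hasFDerivAt.hasFDerivWithinAt)
    hbij.injOn
  set ρ := (volume.restrict (Ioc 0 g)).withDensity fun x =>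
    ENNReal.ofReal |(ContinuousLinearMap.toSpanSingleton ℝ (α * x ^ (α - 1) / g ^ α)).det|
  have hρ : ρ = (volume.restrict (Ioc 0 g)).withDensity
      fun x => ENNReal.ofReal (α * x ^ (α - 1) / g ^ α) := by
    refine withDensity_congr_ae
      ((ae_restrict_iff' measurableSet_Ioc).2 (ae_of_all _ fun x hx => ?_))
    have := hx.1
    dsimp only
    rw [ContinuousLinearMap.det_toSpanSingleton, abs_of_nonneg (by positivity)]
  have hleft : ∀ᵐ x ∂ρ, ((fun u : ℝ => u ^ α⁻¹ * g) ∘ fun x => (x / g) ^ α) x = id x :=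
    withDensity_absolutelyContinuous _ _ ((ae_restrict_iff' measurableSet_Ioc).2
      (ae_of_all _ (invOn_rpow_inv_mul_div_rpow hα hg).1))
  rw [Measure.restrict_congr_set Ioc_ae_eq_Icc.symm, ← hbij.image_eq, ← hcov,
    Measure.map_map (by fun_prop) (by fun_prop), Measure.map_congr hleft, Measure.map_id, hρ]

end PowerScaling

section GammaMixture

variable {α lam : ℝ}

theorem gammaPDF_add_one_mul_rpow_div {x g : ℝ} (hα : 0 < α) (hlam : 0 < lam) (hx : 0 < x)
    (hxg : x ≤ g) :
    gammaPDF (α + 1) lam g * ENNReal.ofReal (α * x ^ (α - 1) / g ^ α) =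
      ENNReal.ofReal (lam ^ (α + 1) / Gamma α * x ^ (α - 1)) *
        ENNReal.ofReal (exp (-(lam * g))) := by
  have hg : 0 < g := hx.trans_le hxg
  have := Gamma_pos_of_pos hα
  rw [gammaPDF_of_nonneg hg.le, ← ENNReal.ofReal_mul (by positivity),
    ← ENNReal.ofReal_mul' (exp_pos _).le]
  congr 1
  rw [Gamma_add_one hα.ne', add_sub_cancel_right]
  field_simp

theorem lintegral_indicator_Ioc_gammaMeasure {x : ℝ} (hα : 0 < α) (hlam : 0 < lam)
    (hx : 0 < x) :
    ∫⁻ g, (Ioc 0 g).indicator (fun x => ENNReal.ofReal (α * x ^ (α - 1) / g ^ α)) x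
      ∂gammaMeasure (α + 1) lam = gammaPDF α lam x := by
  have hpoint : ∀ g, gammaPDF (α + 1) lam g * (Ioc 0 g).indicator
      (fun x => ENNReal.ofReal (α * x ^ (α - 1) / g ^ α)) x = (Ici x).indicator
      (fun g => ENNReal.ofReal (lam ^ (α + 1) / Gamma α * x ^ (α - 1)) *
        ENNReal.ofReal (exp (-(lam * g)))) g := by
    intro g
    by_cases hxg : x ≤ g
    · rw [indicator_of_mem (show x ∈ Ioc 0 g from ⟨hx, hxg⟩), indicator_of_mem (mem_Ici.2 hxg),
        gammaPDF_add_one_mul_rpow_div hα hlam hx hxg]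
    · rw [indicator_of_notMem (fun h => hxg h.2), indicator_of_notMem (show g ∉ Ici x from hxg),
        mul_zero]
  have hpdf : Measurable (gammaPDF (α + 1) lam) := (measurable_gammaPDFReal _ _).ennreal_ofReal
  rw [gammaMeasure, lintegral_withDensity_eq_lintegral_mul_non_measurable _ hpdf
    (ae_of_all _ fun _ => ENNReal.ofReal_lt_top)]
  simp_rw [Pi.mul_apply, hpoint]
  rw [lintegral_indicator measurableSet_Ici, Measure.restrict_congr_set Ioi_ae_eq_Ici.symm,
    lintegral_const_mul' _ _ ENNReal.ofReal_ne_top, lintegral_Ioi_exp_neg_mul hlam,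
    ← ENNReal.ofReal_mul (by have := Gamma_pos_of_pos hα; positivity),
    gammaPDF_of_nonneg hx.le, rpow_add_one hlam.ne']
  congr 1
  field_simp

theorem map_rpow_inv_mul_prod_gammaMeasure (hα : 0 < α) (hlam : 0 < lam) :
    ((volume.restrict (Icc (0:ℝ) 1)).prod (gammaMeasure (α + 1) lam)).map
      (fun p : ℝ × ℝ => p.1 ^ α⁻¹ * p.2) = gammaMeasure α lam := by
  set k : ℝ → ℝ → ℝ≥0∞ := fun g =>
    (Ioc 0 g).indicator fun x => ENNReal.ofReal (α * x ^ (α - 1) / g ^ α)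
  have hk : Measurable (Function.uncurry k) := by
    change Measurable ({p : ℝ × ℝ | p.2 ∈ Ioc 0 p.1}.indicator
      fun p => ENNReal.ofReal (α * p.2 ^ (α - 1) / p.1 ^ α))
    exact Measurable.indicator (by fun_prop)
      ((measurableSet_lt measurable_const measurable_snd).inter
        (measurableSet_le measurable_snd measurable_fst))
  have hslice : ∀ᵐ g ∂gammaMeasure (α + 1) lam,
      (volume.restrict (Icc 0 1)).map (fun u => u ^ α⁻¹ * g) = volume.withDensity (k g) :=
    (ae_pos_gammaMeasure _ _).mono fun g hg => by
      rw [map_rpow_inv_mul_uniform hα hg, withDensity_indicator measurableSet_Ioc]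
  have hdensity :
      (fun x => ∫⁻ g, k g x ∂gammaMeasure (α + 1) lam) =ᵐ[volume] gammaPDF α lam := by
    filter_upwards [Measure.ae_ne volume 0] with x hx
    rcases hx.lt_or_gt with hneg | hpos
    · simp [k, indicator_of_notMem (fun h : x ∈ Ioc 0 _ => hneg.not_gt h.1),
        gammaPDF_of_neg hneg]
    · exact lintegral_indicator_Ioc_gammaMeasure hα hlam hpos
  have := isProbabilityMeasure_gammaMeasure (by linarith : 0 < α + 1) hlam
  have hf : Measurable fun p : ℝ × ℝ => p.1 ^ α⁻¹ * p.2 := by fun_prop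
  ext s hs
  calc _ = ∫⁻ g, (volume.restrict (Icc 0 1)).map (fun u => u ^ α⁻¹ * g) s
        ∂gammaMeasure (α + 1) lam := by
        rw [Measure.map_apply hf hs, Measure.prod_apply_symm (hf hs)]
        refine lintegral_congr fun g => ?_
        rw [Measure.map_apply (by fun_prop) hs]
        rfl
    _ = ∫⁻ g, volume.withDensity (k g) s ∂gammaMeasure (α + 1) lam :=
        lintegral_congr_ae (hslice.mono fun g hg => congrArg (fun μ : Measure ℝ => μ s) hg)
    _ = volume.withDensity (fun x => ∫⁻ g, k g x ∂gammaMeasure (α + 1) lam) s :=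
        lintegral_withDensity_apply_eq_withDensity_lintegral _ _ hk hs
    _ = gammaMeasure α lam s := by rw [withDensity_congr_ae hdensity, gammaMeasure]

end GammaMixture

/-- If `U` is uniform on `[0,1]` and `G` is gamma`(α+1, λ)`, independent of `U`,
then `U^{1/α} * G` is gamma`(α, λ)`. -/
theorem uniform_rpow_mul_gamma {Ω : Type*} [MeasurableSpace Ω] (P : Measure Ω)
    [IsProbabilityMeasure P] (α lam : ℝ) (hα : 0 < α) (hlam : 0 < lam)
    (U G : Ω → ℝ) (hU : Measurable U) (hG : Measurable G)
    (hUlaw : P.map U = volume.restrict (Set.Icc (0:ℝ) 1))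
    (hGlaw : P.map G = gammaMeasure (α + 1) lam)
    (hindep : IndepFun U G P) :
    P.map (fun ω => U ω ^ (α⁻¹ : ℝ) * G ω) = gammaMeasure α lam := by
  have hpair : P.map (fun ω => (U ω, G ω)) = (P.map U).prod (P.map G) :=
    hindep.map_prod_eq_prod_map_map hU.aemeasurable hG.aemeasurable
  rw [← map_rpow_inv_mul_prod_gammaMeasure hα hlam, ← hUlaw, ← hGlaw, ← hpair,
    Measure.map_map (by fun_prop) (hU.prodMk hG)]
  rfl
end
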